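/- arXiv:math/0507379 — 9 statements merged into one kernel-verified Lean document; each statement's English description precedes it below -/
import Mathlib

section
/- Let A, B, C be three affinely independent points in the Euclidean plane and let β = ∠ABC be the angle at B. Then (dist A B + dist B C) / (2π − β) < (dist A B + dist B C + dist A C) / (2π). -/
open Real EuclideanGeometry

/-!
By the law of cosines, `AC² - (AB + BC)² sin² (β/2) = (AB - BC)² cos² (β/2) ≥ 0`, so
`AC ≥ (AB + BC) sin (β/2)`, and Jordan's inequality `β ≤ π sin (β/2)` turns this into
`β (AB + BC) ≤ π AC`. Adding `β AC < π AC` gives `β (AB + BC + AC) < 2π AC`, which is the claim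
after clearing denominators.
-/

theorem Real.le_pi_mul_sin_half {x : ℝ} (hx₀ : 0 ≤ x) (hxπ : x ≤ π) : x ≤ π * sin (x / 2) := by
  have h := mul_le_sin (x := x / 2) (by linarith) (by linarith)
  rw [show 2 / π * (x / 2) = x / π by field_simp, div_le_iff₀ pi_pos] at h
  linarith

namespace EuclideanGeometry

variable {V P : Type*} [NormedAddCommGroup V] [InnerProductSpace ℝ V] [MetricSpace P]
  [NormedAddTorsor V P]

theorem dist_add_dist_mul_sin_half_angle_le (p₁ p₂ p₃ : P) :
    (dist p₁ p₂ + dist p₂ p₃) * sin (∠ p₁ p₂ p₃ / 2) ≤ dist p₁ p₃ := by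
  set a := dist p₁ p₂
  set b := dist p₂ p₃
  set β := ∠ p₁ p₂ p₃
  have hlaw : dist p₁ p₃ ^ 2 = a ^ 2 + b ^ 2 - 2 * a * b * cos β := by
    simpa only [sq, dist_comm p₃ p₂] using law_cos p₁ p₂ p₃
  have hsin : sin (β / 2) ^ 2 = (1 - cos β) / 2 := by
    rw [sin_sq_eq_half_sub, mul_div_cancel₀ β two_ne_zero]; ring
  have hsq : ((a + b) * sin (β / 2)) ^ 2 ≤ dist p₁ p₃ ^ 2 := by
    rw [mul_pow, hsin, hlaw]
    nlinarith [mul_nonneg (sq_nonneg (a - b)) (by linarith [neg_one_le_cos β] : 0 ≤ 1 + cos β)]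
  exact abs_le_of_sq_le_sq' hsq dist_nonneg |>.2

theorem angle_mul_perimeter_lt {p₁ p₂ p₃ : P} (h₁₃ : p₁ ≠ p₃) (hπ : ∠ p₁ p₂ p₃ < π) :
    ∠ p₁ p₂ p₃ * (dist p₁ p₂ + dist p₂ p₃ + dist p₁ p₃) < 2 * π * dist p₁ p₃ := by
  have hsin := dist_add_dist_mul_sin_half_angle_le p₁ p₂ p₃
  have hjordan := le_pi_mul_sin_half (angle_nonneg p₁ p₂ p₃) hπ.le
  have hsum : 0 ≤ dist p₁ p₂ + dist p₂ p₃ := by positivity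
  have hside : ∠ p₁ p₂ p₃ * dist p₁ p₃ < π * dist p₁ p₃ :=
    mul_lt_mul_of_pos_right hπ (dist_pos.2 h₁₃)
  have hshort : ∠ p₁ p₂ p₃ * (dist p₁ p₂ + dist p₂ p₃) ≤ π * dist p₁ p₃ :=
    calc ∠ p₁ p₂ p₃ * (dist p₁ p₂ + dist p₂ p₃)
        ≤ π * sin (∠ p₁ p₂ p₃ / 2) * (dist p₁ p₂ + dist p₂ p₃) :=
          mul_le_mul_of_nonneg_right hjordan hsum
      _ = π * ((dist p₁ p₂ + dist p₂ p₃) * sin (∠ p₁ p₂ p₃ / 2)) := by ring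
      _ ≤ π * dist p₁ p₃ := mul_le_mul_of_nonneg_left hsin pi_pos.le
  linarith

end EuclideanGeometry

/-- **Lemma 4** of Nazarov–Petrov: for any (nondegenerate) triangle `ABC` in the plane with
angle `β = ∠ABC` at `B`, one has `(AB + BC)/(2π − β) < (AB + BC + AC)/(2π)`. -/
theorem lemma4_strict (A B C : EuclideanSpace ℝ (Fin 2))
    (hABC : AffineIndependent ℝ ![A, B, C]) :
    (dist A B + dist B C) / (2 * π - ∠ A B C) <
      (dist A B + dist B C + dist A C) / (2 * π) := by
  have hnc : ¬Collinear ℝ {A, B, C} := affineIndependent_iff_not_collinear_set.1 hABC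
  have hπ : ∠ A B C < π := angle_lt_pi_of_not_collinear hnc
  have hkey := angle_mul_perimeter_lt (ne₁₃_of_not_collinear hnc) hπ
  rw [div_lt_div_iff₀ (by linarith [pi_pos]) (by positivity)]
  linarith
end

section
/- Let A, B, C be points in the Euclidean plane with B ≠ A and B ≠ C, and let β = ∠ABC. Then (dist A B + dist B C) / (2π − β) ≤ (dist A B + dist B C + dist A C) / (2π), i.e. the triangle inequality of Lemma 4 holds in non-strict form also for degenerate triangles. -/
/-!
By the law of cosines, `AC² - (AB + BC)² sin² (β/2) = (1 + cos β) (AB - BC)² / 2 ≥ 0`, so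
`AC ≥ (AB + BC) sin (β/2)`, and Jordan's inequality `sin (β/2) ≥ β/π` gives
`β (AB + BC) ≤ π AC ≤ (2π - β) AC`, which rearranges to the claim.
-/

open Real EuclideanGeometry

theorem div_pi_le_sin_half {x : ℝ} (hx₀ : 0 ≤ x) (hxπ : x ≤ π) : x / π ≤ sin (x / 2) :=
  calc x / π = 2 / π * (x / 2) := by ring
    _ ≤ sin (x / 2) := mul_le_sin (by linarith) (by linarith)

section InnerProductSpace

variable {V P : Type*} [NormedAddCommGroup V] [InnerProductSpace ℝ V] [MetricSpace P]
  [NormedAddTorsor V P]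

theorem add_dist_mul_sin_half_angle_le_dist (A B C : P) :
    (dist A B + dist B C) * sin (∠ A B C / 2) ≤ dist A C := by
  have h_sin_nonneg : 0 ≤ sin (∠ A B C / 2) :=
    sin_nonneg_of_nonneg_of_le_pi (by linarith [angle_nonneg A B C])
      (by linarith [angle_le_pi A B C, pi_pos])
  have h_sq : ((dist A B + dist B C) * sin (∠ A B C / 2)) ^ 2 ≤ dist A C ^ 2 := by
    have h_law := law_cos A B C
    have h_half : sin (∠ A B C / 2) ^ 2 = (1 - cos (∠ A B C)) / 2 := by
      rw [sin_sq_eq_half_sub, mul_div_cancel₀ _ two_ne_zero]; ring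
    rw [dist_comm C B] at h_law
    have h_cos : 0 ≤ 1 + cos (∠ A B C) := by linarith [neg_one_le_cos (∠ A B C)]
    rw [mul_pow, h_half, sq (dist A C), h_law]
    nlinarith [mul_nonneg h_cos (sq_nonneg (dist A B - dist B C))]
  exact (pow_le_pow_iff_left₀ (by positivity) dist_nonneg two_ne_zero).mp h_sq

theorem angle_mul_add_dist_le_pi_mul_dist (A B C : P) :
    ∠ A B C * (dist A B + dist B C) ≤ π * dist A C :=
  calc ∠ A B C * (dist A B + dist B C)
      = π * ((dist A B + dist B C) * (∠ A B C / π)) := by field_simp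
    _ ≤ π * ((dist A B + dist B C) * sin (∠ A B C / 2)) := by
      gcongr
      exact div_pi_le_sin_half (angle_nonneg A B C) (angle_le_pi A B C)
    _ ≤ π * dist A C := by gcongr; exact add_dist_mul_sin_half_angle_le_dist A B C

end InnerProductSpace

theorem lemma4_weak_general (A B C : EuclideanSpace ℝ (Fin 2)) :
    (dist A B + dist B C) / (2 * π - ∠ A B C) ≤
      (dist A B + dist B C + dist A C) / (2 * π) := by
  have h_key := angle_mul_add_dist_le_pi_mul_dist A B C
  have h_le_pi := angle_le_pi A B C
  rw [div_le_div_iff₀ (by linarith [pi_pos]) (by positivity)]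
  nlinarith [dist_nonneg (x := A) (y := C)]

/-- **Lemma 4, degenerate form**: for any points `A`, `B`, `C` in the plane with `B ≠ A`,
`B ≠ C` and `β = ∠ABC`, one has `(AB + BC)/(2π − β) ≤ (AB + BC + AC)/(2π)`. -/
theorem lemma4_weak (A B C : EuclideanSpace ℝ (Fin 2))
    (hBA : B ≠ A) (hBC : B ≠ C) :
    (dist A B + dist B C) / (2 * π - ∠ A B C) ≤
      (dist A B + dist B C + dist A C) / (2 * π) :=
  lemma4_weak_general A B C
end

section
/- Let A, B, C be points in the Euclidean plane with B ≠ A and B ≠ C, and suppose β = ∠ABC > 0. Then (dist A B + dist B C) · sin(β/2) ≤ dist A C. -/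
/-!
By the law of cosines and the half-angle formulas,
`AC² = ((AB + BC) sin(β/2))² + ((AB - BC) cos(β/2))²`,
so `AC² ≥ ((AB + BC) sin(β/2))²`.
-/

open Real EuclideanGeometry

theorem Real.sq_add_sq_sub_two_mul_mul_cos (a b θ : ℝ) :
    a ^ 2 + b ^ 2 - 2 * a * b * cos θ =
      ((a + b) * sin (θ / 2)) ^ 2 + ((a - b) * cos (θ / 2)) ^ 2 := by
  have hcos : cos θ = cos (θ / 2) ^ 2 - sin (θ / 2) ^ 2 := by
    rw [← cos_two_mul', mul_div_cancel₀ θ two_ne_zero]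
  rw [hcos]
  linear_combination -(a ^ 2 + b ^ 2) * sin_sq_add_cos_sq (θ / 2)

theorem EuclideanGeometry.dist_add_dist_mul_sin_half_angle_le_s2 {V P : Type*}
    [NormedAddCommGroup V] [InnerProductSpace ℝ V] [MetricSpace P] [NormedAddTorsor V P]
    (A B C : P) : (dist A B + dist B C) * sin (∠ A B C / 2) ≤ dist A C := by
  have hAC : dist A C ^ 2 = ((dist A B + dist B C) * sin (∠ A B C / 2)) ^ 2 +
      ((dist A B - dist B C) * cos (∠ A B C / 2)) ^ 2 := by
    rw [← Real.sq_add_sq_sub_two_mul_mul_cos, dist_comm B C]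
    linear_combination law_cos A B C
  exact le_of_sq_le_sq (by rw [hAC]; exact le_add_of_nonneg_right (sq_nonneg _)) dist_nonneg

theorem sine_estimate_general (A B C : EuclideanSpace ℝ (Fin 2)) :
    (dist A B + dist B C) * Real.sin (∠ A B C / 2) ≤ dist A C :=
  dist_add_dist_mul_sin_half_angle_le_s2 A B C

/-- For points `A, B, C` in the plane with `B ≠ A`, `B ≠ C` and `β = ∠ABC > 0`, one has
`(AB + BC) · sin(β/2) ≤ AC`. -/
theorem sine_estimate (A B C : EuclideanSpace ℝ (Fin 2))
    (hBA : B ≠ A) (hBC : B ≠ C) (hβ : 0 < ∠ A B C) :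
    (dist A B + dist B C) * Real.sin (∠ A B C / 2) ≤ dist A C :=
  sine_estimate_general A B C
end

section
/- Let γ : [a, b] → EuclideanSpace ℝ (Fin 2) (a < b) be a continuously differentiable unit-speed curve with A = γ(a) ≠ γ(b) = B. Then the total rotation of γ is at least angle(γ'(a), B − A) + angle(γ'(b), B − A), where angle(u, v) is the undirected angle between the nonzero vectors u and v. -/
/-!
If some velocity `γ'(p)` points along `B - A`, the triangle inequality for angles through `γ'(p)`
already gives the bound. Otherwise the oriented angle `ψ(t)` from `A - B` to `γ'(t)` never equals
`π`, so it lifts to a continuous function with values in `(-π, π)`. Since `∫ γ' = B - A`, we get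
`∫ cos ψ < 0` and `∫ sin ψ = 0`; if the range `[m, M]` of `ψ` had length at most `π`, then
`cos (ψ - c) ≥ cos ((M - m) / 2) ≥ 0` for its midpoint `c` would contradict
`∫ cos (ψ - c) = cos c * ∫ cos ψ`. Hence `M - m > π`. Passing through the velocities at which
`ψ` equals `m`, `(m + M) / 2` and `M` turns by `M - m`, which exceeds the detour
`2π - |m| - |M|` through the direction of `B - A`; the triangle inequality for angles at both
ends finishes the proof.
-/

open Real ENNReal InnerProductGeometry

/-- The total rotation of a curve on `[a, b]` with velocity field `g`: the supremum, over all
finite partitions `a = t₀ < t₁ < … < t_N = b`, of the sums of undirected angles between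
consecutive velocities, taken in `[0, ∞]`. -/
noncomputable def totalRotation (g : ℝ → EuclideanSpace ℝ (Fin 2)) (a b : ℝ) : ℝ≥0∞ :=
  sSup {v : ℝ≥0∞ | ∃ (N : ℕ) (t : ℕ → ℝ), t 0 = a ∧ t N = b ∧ (∀ i < N, t i < t (i + 1)) ∧
    v = ∑ i ∈ Finset.range N,
      ENNReal.ofReal (InnerProductGeometry.angle (g (t i)) (g (t (i + 1))))}

open Set Module
open scoped EuclideanSpace

section TotalRotation

variable (g : ℝ → EuclideanSpace ℝ (Fin 2))

def partitionSums (a b : ℝ) : Set ℝ≥0∞ :=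
  {v : ℝ≥0∞ | ∃ (N : ℕ) (t : ℕ → ℝ), t 0 = a ∧ t N = b ∧ (∀ i < N, t i < t (i + 1)) ∧
    v = ∑ i ∈ Finset.range N, ENNReal.ofReal (angle (g (t i)) (g (t (i + 1))))}

lemma totalRotation_eq_sSup (a b : ℝ) : totalRotation g a b = sSup (partitionSums g a b) := rfl

lemma ofReal_angle_mem_partitionSums {a b : ℝ} (hab : a < b) :
    ENNReal.ofReal (angle (g a) (g b)) ∈ partitionSums g a b :=
  ⟨1, fun i => if i = 0 then a else b, by simp, by simp, by simp [hab], by simp⟩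

lemma partitionSums_nonempty {a b : ℝ} (hab : a ≤ b) : (partitionSums g a b).Nonempty := by
  rcases hab.eq_or_lt with rfl | hab
  · exact ⟨0, 0, fun _ => a, rfl, rfl, by simp, by simp⟩
  · exact ⟨_, ofReal_angle_mem_partitionSums g hab⟩

lemma add_mem_partitionSums {v₁ v₂ : ℝ≥0∞} {a c b : ℝ} (h₁ : v₁ ∈ partitionSums g a c)
    (h₂ : v₂ ∈ partitionSums g c b) : v₁ + v₂ ∈ partitionSums g a b := by
  obtain ⟨N₁, t, ht0, htN, ht, rfl⟩ := h₁
  obtain ⟨N₂, u, hu0, huN, hu, rfl⟩ := h₂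
  set s : ℕ → ℝ := fun i => if i ≤ N₁ then t i else u (i - N₁) with hs
  have hs_left : ∀ i ≤ N₁, s i = t i := fun i hi => if_pos hi
  have hs_right : ∀ j, s (N₁ + j) = u j := by
    intro j
    rcases j.eq_zero_or_pos with rfl | hj
    · simp [hs_left, htN, hu0]
    · simp [hs, show ¬ N₁ + j ≤ N₁ by omega]
  refine ⟨N₁ + N₂, s, by simp [hs_left, ht0], by rw [hs_right, huN], ?_, ?_⟩
  · intro i hi
    rcases lt_or_ge i N₁ with hi₁ | hi₁
    · rw [hs_left i hi₁.le, hs_left (i + 1) hi₁]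
      exact ht i hi₁
    · obtain ⟨j, rfl⟩ := Nat.exists_eq_add_of_le hi₁
      rw [hs_right, add_assoc, hs_right]
      exact hu j (by omega)
  · rw [Finset.sum_range_add]
    congr 1
    · refine Finset.sum_congr rfl fun i hi => ?_
      rw [Finset.mem_range] at hi
      rw [hs_left i hi.le, hs_left (i + 1) hi]
    · refine Finset.sum_congr rfl fun j _ => ?_
      rw [hs_right, add_assoc, hs_right]

lemma totalRotation_add_le {a c b : ℝ} (hac : a ≤ c) (hcb : c ≤ b) :
    totalRotation g a c + totalRotation g c b ≤ totalRotation g a b := by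
  simp only [totalRotation_eq_sSup, sSup_eq_iSup]
  exact ENNReal.biSup_add_biSup_le (partitionSums_nonempty g hac) (partitionSums_nonempty g hcb)
    fun v₁ h₁ v₂ h₂ => le_iSup₂_of_le (v₁ + v₂) (add_mem_partitionSums g h₁ h₂) le_rfl

lemma ofReal_angle_le_totalRotation {a b : ℝ} (hab : a ≤ b) (ha : g a ≠ 0) :
    ENNReal.ofReal (angle (g a) (g b)) ≤ totalRotation g a b := by
  rcases hab.eq_or_lt with rfl | hab
  · simp [angle_self ha]
  · exact le_sSup (ofReal_angle_mem_partitionSums g hab)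

lemma ofReal_angle_add_totalRotation_le {a c b : ℝ} (hac : a ≤ c) (hcb : c ≤ b) (ha : g a ≠ 0) :
    ENNReal.ofReal (angle (g a) (g c)) + totalRotation g c b ≤ totalRotation g a b :=
  calc ENNReal.ofReal (angle (g a) (g c)) + totalRotation g c b
      ≤ totalRotation g a c + totalRotation g c b := by
        gcongr; exact ofReal_angle_le_totalRotation g hac ha
    _ ≤ totalRotation g a b := totalRotation_add_le g hac hcb

lemma ofReal_angle_add_angle_le_totalRotation {a b p₁ p₂ q : ℝ} (d : EuclideanSpace ℝ (Fin 2))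
    (hp₁ : p₁ ∈ Icc a b) (hp₂ : p₂ ∈ Icc a b) (hq : q ∈ uIcc p₁ p₂)
    (hg : ∀ t ∈ Icc a b, g t ≠ 0)
    (h : angle (g p₁) d + angle (g p₂) d ≤ angle (g p₁) (g q) + angle (g q) (g p₂)) :
    ENNReal.ofReal (angle (g a) d + angle (g b) d) ≤ totalRotation g a b := by
  wlog hle : p₁ ≤ p₂ generalizing p₁ p₂
  · refine this hp₂ hp₁ (uIcc_comm p₁ p₂ ▸ hq) ?_ (le_of_not_ge hle)
    linarith [angle_comm (g p₂) (g q), angle_comm (g q) (g p₁)]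
  rw [uIcc_of_le hle] at hq
  have hreal : angle (g a) d + angle (g b) d ≤ angle (g a) (g p₁) +
      (angle (g p₁) (g q) + (angle (g q) (g p₂) + angle (g p₂) (g b))) := by
    linarith [angle_le_angle_add_angle (g a) (g p₁) d, angle_le_angle_add_angle (g b) (g p₂) d,
      angle_comm (g b) (g p₂)]
  have ha : a ∈ Icc a b := ⟨le_rfl, hp₁.1.trans hp₁.2⟩
  have hqI : q ∈ Icc a b := ⟨hp₁.1.trans hq.1, hq.2.trans hp₂.2⟩
  calc ENNReal.ofReal (angle (g a) d + angle (g b) d)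
      ≤ ENNReal.ofReal (angle (g a) (g p₁)) + (ENNReal.ofReal (angle (g p₁) (g q)) +
          (ENNReal.ofReal (angle (g q) (g p₂)) + ENNReal.ofReal (angle (g p₂) (g b)))) := by
        refine (ENNReal.ofReal_le_ofReal hreal).trans_eq ?_
        rw [ENNReal.ofReal_add, ENNReal.ofReal_add, ENNReal.ofReal_add] <;>
          simp only [angle_nonneg, add_nonneg]
    _ ≤ ENNReal.ofReal (angle (g a) (g p₁)) + (ENNReal.ofReal (angle (g p₁) (g q)) +
          (ENNReal.ofReal (angle (g q) (g p₂)) + totalRotation g p₂ b)) := by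
        gcongr; exact ofReal_angle_le_totalRotation g hp₂.2 (hg p₂ hp₂)
    _ ≤ ENNReal.ofReal (angle (g a) (g p₁)) + (ENNReal.ofReal (angle (g p₁) (g q)) +
          totalRotation g q b) := by
        gcongr; exact ofReal_angle_add_totalRotation_le g hq.2 hp₂.2 (hg q hqI)
    _ ≤ ENNReal.ofReal (angle (g a) (g p₁)) + totalRotation g p₁ b := by
        gcongr; exact ofReal_angle_add_totalRotation_le g hq.1 hqI.2 (hg p₁ hp₁)
    _ ≤ totalRotation g a b := ofReal_angle_add_totalRotation_le g hp₁.1 hp₁.2 (hg a ha)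

end TotalRotation

theorem integral_eq_sub_of_hasDerivWithinAt_Icc {E : Type*} [NormedAddCommGroup E]
    [NormedSpace ℝ E] [CompleteSpace E] {f f' : ℝ → E} {a b : ℝ} (hab : a ≤ b)
    (hderiv : ∀ t ∈ Icc a b, HasDerivWithinAt f (f' t) (Icc a b) t)
    (hcont : ContinuousOn f' (Icc a b)) :
    ∫ t in a..b, f' t = f b - f a :=
  intervalIntegral.integral_eq_sub_of_hasDerivAt_of_le hab
    (fun t ht => (hderiv t ht).continuousWithinAt)
    (fun t ht => (hderiv t (Ioo_subset_Icc_self ht)).hasDerivAt (Icc_mem_nhds ht.1 ht.2))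
    (hcont.intervalIntegrable_of_Icc hab)

lemma pi_lt_sub_of_integral_cos_neg {ψ : ℝ → ℝ} {a b m M : ℝ} (hab : a ≤ b)
    (hψ : ContinuousOn ψ (Icc a b)) (hmaps : MapsTo ψ (Icc a b) (Icc m M))
    (hm : -π < m) (hM : M < π)
    (hcos : ∫ t in a..b, cos (ψ t) < 0) (hsin : ∫ t in a..b, sin (ψ t) = 0) :
    π < M - m := by
  by_contra! hwidth
  have hmM : m ≤ M := (hmaps (left_mem_Icc.2 hab)).1.trans (hmaps (left_mem_Icc.2 hab)).2
  set c := (m + M) / 2 with hc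
  set δ := (M - m) / 2 with hδ
  have hcos_int : IntervalIntegrable (fun t => cos (ψ t)) MeasureTheory.volume a b :=
    (continuous_cos.comp_continuousOn hψ).intervalIntegrable_of_Icc hab
  have hsin_int : IntervalIntegrable (fun t => sin (ψ t)) MeasureTheory.volume a b :=
    (continuous_sin.comp_continuousOn hψ).intervalIntegrable_of_Icc hab
  have hshift : ∫ t in a..b, cos (ψ t - c) = cos c * ∫ t in a..b, cos (ψ t) := by
    simp only [cos_sub]
    rw [intervalIntegral.integral_add (hcos_int.mul_const _) (hsin_int.mul_const _),
      intervalIntegral.integral_mul_const, intervalIntegral.integral_mul_const, hsin]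
    ring
  have hlower : (b - a) * cos δ ≤ ∫ t in a..b, cos (ψ t - c) := by
    have hint : IntervalIntegrable (fun t => cos (ψ t - c)) MeasureTheory.volume a b :=
      (continuous_cos.comp_continuousOn (hψ.sub continuousOn_const)).intervalIntegrable_of_Icc hab
    have hpt : ∀ t ∈ Icc a b, cos δ ≤ cos (ψ t - c) := fun t ht => by
      obtain ⟨h₁, h₂⟩ := hmaps ht
      rw [← cos_abs (ψ t - c)]
      exact cos_le_cos_of_nonneg_of_le_pi (abs_nonneg _) (by linarith)
        (abs_le.2 ⟨by linarith, by linarith⟩)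
    simpa using intervalIntegral.integral_mono_on hab intervalIntegrable_const hint hpt
  have hupper : -(b - a) ≤ ∫ t in a..b, cos (ψ t) := by
    simpa using intervalIntegral.integral_mono_on hab intervalIntegrable_const hcos_int
      fun t _ => neg_one_le_cos (ψ t)
  have hcos_δ : 0 ≤ cos δ := cos_nonneg_of_mem_Icc ⟨by linarith, by linarith⟩
  have hsum : 0 < cos c + cos δ := by
    rw [cos_add_cos, show (c + δ) / 2 = M / 2 by ring, show (c - δ) / 2 = m / 2 by ring]
    have hM2 := cos_pos_of_mem_Ioo (x := M / 2) ⟨by linarith, by linarith⟩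
    have hm2 := cos_pos_of_mem_Ioo (x := m / 2) ⟨by linarith, by linarith⟩
    positivity
  rw [hshift] at hlower
  -- as `-(b - a) ≤ ∫ cos ψ < 0`, `(b - a) cos δ ≤ cos c ∫ cos ψ` forces `cos c + cos δ ≤ 0`
  nlinarith

section TwoDim

variable {V : Type*} [NormedAddCommGroup V] [InnerProductSpace ℝ V] [Fact (finrank ℝ V = 2)]
  (o : Orientation ℝ V (Fin 2))

attribute [local instance] FiniteDimensional.of_fact_finrank_eq_two

lemma Orientation.exists_continuousOn_oangle_eq {f : ℝ → V} {s : Set ℝ} {v : V} (hv : v ≠ 0)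
    (hf : ContinuousOn f s) (hf0 : ∀ t ∈ s, f t ≠ 0) (hπ : ∀ t ∈ s, o.oangle v (f t) ≠ π) :
    ∃ ψ : ℝ → ℝ, ContinuousOn ψ s ∧ ∀ t ∈ s, ψ t ∈ Ioo (-π) π ∧ o.oangle v (f t) = ψ t := by
  have harg : ∀ t ∈ s, (o.kahler v (f t)).arg ≠ π := fun t ht h => hπ t ht (by
    rw [Orientation.oangle, h])
  refine ⟨fun t => (o.kahler v (f t)).arg, fun t ht => ?_, fun t ht =>
    ⟨⟨Complex.neg_pi_lt_arg _, (Complex.arg_le_pi _).lt_of_ne (harg t ht)⟩, rfl⟩⟩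
  refine (Complex.continuousAt_arg ?_).comp_continuousWithinAt
    (((o.kahler v).continuous_of_finiteDimensional.comp_continuousOn hf) t ht)
  exact Complex.mem_slitPlane_iff_arg.2 ⟨harg t ht, o.kahler_ne_zero hv (hf0 t ht)⟩

lemma Orientation.angle_eq_abs_sub {v x y : V} (hv : v ≠ 0) (hx : x ≠ 0) (hy : y ≠ 0) {α β : ℝ}
    (hα : o.oangle v x = α) (hβ : o.oangle v y = β) (h₁ : -π < β - α) (h₂ : β - α ≤ π) :
    angle x y = |β - α| := by
  rw [o.angle_eq_abs_oangle_toReal hx hy, ← o.oangle_sub_left hv hx hy, hα, hβ,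
    ← Real.Angle.coe_sub, Real.Angle.toReal_coe_eq_self_iff.2 ⟨h₁, h₂⟩]

lemma Orientation.integral_cos_eq_inner_div_norm {g : ℝ → V} {ψ : ℝ → ℝ} {a b : ℝ} {w d : V}
    (hab : a ≤ b) (hg : ContinuousOn g (Icc a b)) (hg1 : ∀ t ∈ Icc a b, ‖g t‖ = 1)
    (hint : ∫ t in a..b, g t = d) (hw : w ≠ 0) (hψ : ∀ t ∈ Icc a b, o.oangle w (g t) = ψ t) :
    ∫ t in a..b, cos (ψ t) = inner ℝ w d / ‖w‖ := by
  have hpt : EqOn (fun t => cos (ψ t)) (fun t => inner ℝ w (g t) / ‖w‖) (uIcc a b) := by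
    intro t ht
    rw [uIcc_of_le hab] at ht
    dsimp only
    rw [← Real.Angle.cos_coe, ← hψ t ht,
      o.cos_oangle_eq_inner_div_norm_mul_norm hw (ne_zero_of_norm_ne_zero (by simp [hg1 t ht])),
      hg1 t ht, mul_one]
  rw [intervalIntegral.integral_congr hpt, intervalIntegral.integral_div, ← hint]
  exact congrArg (· / ‖w‖)
    ((innerSL ℝ w).intervalIntegral_comp_comm (hg.intervalIntegrable_of_Icc hab))

lemma Orientation.integral_sin_eq_areaForm_div_norm {g : ℝ → V} {ψ : ℝ → ℝ} {a b : ℝ} {w d : V}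
    (hab : a ≤ b) (hg : ContinuousOn g (Icc a b)) (hg1 : ∀ t ∈ Icc a b, ‖g t‖ = 1)
    (hint : ∫ t in a..b, g t = d) (hw : w ≠ 0) (hψ : ∀ t ∈ Icc a b, o.oangle w (g t) = ψ t) :
    ∫ t in a..b, sin (ψ t) = o.areaForm w d / ‖w‖ := by
  have hJψ : ∀ t ∈ Icc a b, o.oangle (o.rightAngleRotation w) (g t) = ↑(ψ t - π / 2) := by
    intro t ht
    rw [← o.rotation_pi_div_two, o.oangle_rotation_left hw
      (ne_zero_of_norm_ne_zero (by simp [hg1 t ht])), hψ t ht, Real.Angle.coe_sub]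
  simp only [← cos_sub_pi_div_two]
  rw [o.integral_cos_eq_inner_div_norm hab hg hg1 hint (by simpa using hw) hJψ,
    o.inner_rightAngleRotation_left, LinearIsometryEquiv.norm_map]

lemma Orientation.exists_angle_add_angle_le_of_oangle_eq {g : ℝ → V} {ψ : ℝ → ℝ} {a b : ℝ}
    {d : V} (hab : a ≤ b) (hg0 : ∀ t ∈ Icc a b, g t ≠ 0) (hd : d ≠ 0)
    (hψc : ContinuousOn ψ (Icc a b))
    (hψ : ∀ t ∈ Icc a b, ψ t ∈ Ioo (-π) π ∧ o.oangle (-d) (g t) = ψ t)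
    (hcos : ∫ t in a..b, cos (ψ t) < 0) (hsin : ∫ t in a..b, sin (ψ t) = 0) :
    ∃ p₁ ∈ Icc a b, ∃ p₂ ∈ Icc a b, ∃ q ∈ uIcc p₁ p₂,
      angle (g p₁) d + angle (g p₂) d ≤ angle (g p₁) (g q) + angle (g q) (g p₂) := by
  have hnd : -d ≠ 0 := neg_ne_zero.2 hd
  have hangle_d : ∀ t ∈ Icc a b, angle (g t) d = π - |ψ t| := by
    intro t ht
    obtain ⟨⟨h₁, h₂⟩, hψt⟩ := hψ t ht
    have h0 : o.oangle (-d) (-d) = ((0 : ℝ) : Real.Angle) := by simp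
    have := o.angle_eq_abs_sub hnd hnd (hg0 t ht) h0 hψt (by simpa using h₁) (by simpa using h₂.le)
    rw [sub_zero] at this
    linarith [angle_neg_right (g t) d, angle_comm (g t) (-d)]
  obtain ⟨tm, htm, hmin⟩ := isCompact_Icc.exists_isMinOn (nonempty_Icc.2 hab) hψc
  obtain ⟨tM, htM, hmax⟩ := isCompact_Icc.exists_isMaxOn (nonempty_Icc.2 hab) hψc
  obtain ⟨⟨hm₁, hm₂⟩, hψm⟩ := hψ tm htm
  obtain ⟨⟨hM₁, hM₂⟩, hψM⟩ := hψ tM htM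
  have hwidth : π < ψ tM - ψ tm :=
    pi_lt_sub_of_integral_cos_neg hab hψc (fun t ht => ⟨hmin ht, hmax ht⟩) hm₁ hM₂ hcos hsin
  have hsub : uIcc tm tM ⊆ Icc a b := ordConnected_Icc.uIcc_subset htm htM
  obtain ⟨q, hq, hqψ⟩ := intermediate_value_uIcc (hψc.mono hsub)
    (show (ψ tm + ψ tM) / 2 ∈ uIcc (ψ tm) (ψ tM) by
      rw [uIcc_of_le (by linarith [pi_pos])]; constructor <;> linarith [pi_pos])
  have hqI := hsub hq
  refine ⟨tm, htm, tM, htM, q, hq, ?_⟩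
  rw [hangle_d tm htm, hangle_d tM htM,
    o.angle_eq_abs_sub hnd (hg0 tm htm) (hg0 q hqI) hψm (hψ q hqI).2 (by linarith) (by linarith),
    o.angle_eq_abs_sub hnd (hg0 q hqI) (hg0 tM htM) (hψ q hqI).2 hψM (by linarith) (by linarith)]
  linarith [neg_abs_le (ψ tm), le_abs_self (ψ tM), le_abs_self (ψ q - ψ tm),
    le_abs_self (ψ tM - ψ q)]

lemma exists_angle_add_angle_le_of_integral_eq {g : ℝ → V} {a b : ℝ} {d : V} (hab : a ≤ b)
    (hg : ContinuousOn g (Icc a b)) (hg1 : ∀ t ∈ Icc a b, ‖g t‖ = 1) (hd : d ≠ 0)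
    (hint : ∫ t in a..b, g t = d) :
    ∃ p₁ ∈ Icc a b, ∃ p₂ ∈ Icc a b, ∃ q ∈ uIcc p₁ p₂,
      angle (g p₁) d + angle (g p₂) d ≤ angle (g p₁) (g q) + angle (g q) (g p₂) := by
  by_cases hpar : ∃ p ∈ Icc a b, angle (g p) d = 0
  · obtain ⟨p, hp, hp0⟩ := hpar
    refine ⟨p, hp, p, hp, p, left_mem_uIcc, ?_⟩
    rw [hp0, zero_add]
    exact add_nonneg (angle_nonneg _ _) (angle_nonneg _ _)
  push Not at hpar
  let o : Orientation ℝ V (Fin 2) := (finBasisOfFinrankEq ℝ V Fact.out).orientation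
  have hg0 : ∀ t ∈ Icc a b, g t ≠ 0 := fun t ht => ne_zero_of_norm_ne_zero (by simp [hg1 t ht])
  have hnd : -d ≠ 0 := neg_ne_zero.2 hd
  obtain ⟨ψ, hψc, hψ⟩ := o.exists_continuousOn_oangle_eq hnd hg hg0 fun t ht h => hpar t ht (by
    rw [o.oangle_eq_pi_iff_angle_eq_pi, angle_neg_left, angle_comm] at h
    linarith)
  refine o.exists_angle_add_angle_le_of_oangle_eq hab hg0 hd hψc hψ ?_ ?_
  · rw [o.integral_cos_eq_inner_div_norm hab hg hg1 hint hnd fun t ht => (hψ t ht).2]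
    simpa [real_inner_self_eq_norm_sq, neg_div] using
      div_pos (pow_pos (norm_pos_iff.2 hd) 2) (norm_pos_iff.2 hd)
  · rw [o.integral_sin_eq_areaForm_div_norm hab hg hg1 hint hnd fun t ht => (hψ t ht).2]
    simp

end TwoDim

/-- **Lemma 1** of Nazarov–Petrov: for a `C¹` unit-speed curve `γ` on `[a, b]` with endpoints
`A = γ(a) ≠ γ(b) = B`, the total rotation of `γ` is at least
`angle(γ'(a), B − A) + angle(γ'(b), B − A)`. -/
theorem rotation_ge_endpoint_angles (a b : ℝ) (hab : a < b)
    (γ γ' : ℝ → EuclideanSpace ℝ (Fin 2))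
    (hderiv : ∀ t ∈ Set.Icc a b, HasDerivWithinAt γ (γ' t) (Set.Icc a b) t)
    (hcont : ContinuousOn γ' (Set.Icc a b))
    (hunit : ∀ t ∈ Set.Icc a b, ‖γ' t‖ = 1)
    (hne : γ a ≠ γ b) :
    ENNReal.ofReal
        (InnerProductGeometry.angle (γ' a) (γ b - γ a) +
          InnerProductGeometry.angle (γ' b) (γ b - γ a)) ≤
      totalRotation γ' a b := by
  have hd : γ b - γ a ≠ 0 := sub_ne_zero.2 hne.symm
  obtain ⟨p₁, hp₁, p₂, hp₂, q, hq, h⟩ := exists_angle_add_angle_le_of_integral_eq hab.le hcont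
    hunit hd (integral_eq_sub_of_hasDerivWithinAt_Icc hab.le hderiv hcont)
  exact ofReal_angle_add_angle_le_totalRotation γ' _ hp₁ hp₂ hq
    (fun t ht => ne_zero_of_norm_ne_zero (by simp [hunit t ht])) h
end

section
/- (Spherical–planar angle comparison.) Let a, b, c be the side lengths of a nondegenerate spherical triangle with a + b + c < 2π, with spherical angles α, β, γ opposite a, b, c respectively, and let α', β', γ' be the angles of the planar triangle with the same side lengths a, b, c. Then α − α' < (β − β') + (γ − γ'). -/
open Real

/-- The spherical angle opposite the side of length `a` in a spherical triangle with side
lengths `a`, `b`, `c`, given by the spherical law of cosines. -/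
noncomputable def sphAngle (a b c : ℝ) : ℝ :=
  Real.arccos ((Real.cos a - Real.cos b * Real.cos c) / (Real.sin b * Real.sin c))

/-- The angle opposite the side of length `a` in a planar triangle with side lengths
`a`, `b`, `c`, given by the planar law of cosines. -/
noncomputable def planarAngle (a b c : ℝ) : ℝ :=
  Real.arccos ((b ^ 2 + c ^ 2 - a ^ 2) / (2 * b * c))

/-!
Put `θ = α - E / 2`, where `E = α + β + γ - π` is the spherical excess. The planar angles are
the angles of an actual Euclidean triangle, so `α' + β' + γ' = π` and the claim is `θ < α'`.
Both `θ / 2` and `α' / 2` lie in `[0, π / 2)`, so it suffices to compare `tan²` of them. With `s`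
the semiperimeter, the planar half-angle formula gives
`tan² (α' / 2) = (s - b) (s - c) / (s (s - a))`, and the spherical half-angle formulas together
with Delambre's analogies give
`tan² (θ / 2) = tan ((s - b) / 2) tan ((s - c) / 2) / (tan (s / 2) tan ((s - a) / 2))`:
the same expression in the half-lengths `x`, with `x` replaced by `tan x`. The comparison then
holds because `h t = tan t / t` satisfies `h p * h q ≤ h (p + q)` and `1 < h t` on `(0, π / 2)`.
-/

open Set

theorem cos_sq_half_eq (x : ℝ) : cos (x / 2) ^ 2 = (1 + cos x) / 2 := by
  rw [cos_sq, mul_div_cancel₀ x two_ne_zero]; ring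

theorem sin_sq_half_eq (x : ℝ) : sin (x / 2) ^ 2 = (1 - cos x) / 2 := by
  rw [sin_sq, cos_sq_half_eq]; ring

theorem tan_half_sq (x : ℝ) : tan (x / 2) ^ 2 = (1 - cos x) / (1 + cos x) := by
  rw [tan_eq_sin_div_cos, div_pow, sin_sq_half_eq, cos_sq_half_eq,
    div_div_div_cancel_right₀ two_ne_zero]

theorem sin_eq_two_mul_sin_half_mul_cos_half (x : ℝ) :
    sin x = 2 * sin (x / 2) * cos (x / 2) := by
  rw [← sin_two_mul, mul_div_cancel₀ x two_ne_zero]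

theorem cos_sub_sub_cos_add (x y : ℝ) : cos (x - y) - cos (x + y) = 2 * sin x * sin y := by
  rw [cos_sub, cos_add]; ring

theorem cos_sub_add_cos_add (x y : ℝ) : cos (x - y) + cos (x + y) = 2 * cos x * cos y := by
  rw [cos_sub, cos_add]; ring

theorem sin_mul_sin_eq_cos_sq_sub_cos_sq (p q : ℝ) :
    sin p * sin q = cos ((p - q) / 2) ^ 2 - cos ((p + q) / 2) ^ 2 := by
  rw [cos_sq_half_eq, cos_sq_half_eq]
  linarith [cos_sub_sub_cos_add p q]

theorem sin_half_pos_of_mem_Ioo {x : ℝ} (hx : x ∈ Ioo 0 π) : 0 < sin (x / 2) :=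
  sin_pos_of_pos_of_lt_pi (by linarith [hx.1]) (by linarith [hx.2, pi_pos])

theorem cos_half_pos_of_mem_Ioo {x : ℝ} (hx : x ∈ Ioo 0 π) : 0 < cos (x / 2) :=
  cos_pos_of_mem_Ioo ⟨by linarith [hx.1, pi_pos], by linarith [hx.2]⟩

theorem strictMonoOn_tan_half_sq : StrictMonoOn (fun x => tan (x / 2) ^ 2) (Ico 0 π) := by
  intro x hx y hy hxy
  have htan : tan (x / 2) < tan (y / 2) :=
    tan_lt_tan_of_lt_of_lt_pi_div_two (by linarith [hx.1, pi_pos]) (by linarith [hy.2])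
      (by linarith)
  have h0 : 0 ≤ tan (x / 2) :=
    tan_nonneg_of_nonneg_of_le_pi_div_two (by linarith [hx.1]) (by linarith [hx.2])
  exact pow_lt_pow_left₀ htan h0 two_ne_zero

theorem tan_add_of_cos_ne_zero {p q : ℝ} (hp : cos p ≠ 0) (hq : cos q ≠ 0) :
    tan (p + q) = (tan p + tan q) / (1 - tan p * tan q) := by
  simp only [tan_eq_sin_div_cos, sin_add, cos_add]
  field_simp

theorem tan_mul_one_sub_sq_le {r : ℝ} (h0 : 0 < r) (h1 : r < π / 2) :
    tan r * (1 - r ^ 2) ≤ r := by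
  have hcos : 0 < cos r := cos_pos_of_mem_Ioo ⟨by linarith, h1⟩
  have hsin : 0 ≤ sin r := sin_nonneg_of_nonneg_of_le_pi h0.le (by linarith)
  rw [tan_eq_sin_div_cos, div_mul_eq_mul_div, div_le_iff₀ hcos]
  rcases le_or_gt 1 r with h | h
  · nlinarith [mul_nonpos_of_nonneg_of_nonpos hsin (by nlinarith : 1 - r ^ 2 ≤ 0),
      mul_pos h0 hcos]
  · nlinarith [sin_lt h0, one_sub_sq_div_two_le_cos (x := r)]

theorem tan_div_mul_tan_div_le {p q : ℝ} (hp : 0 < p) (hq : 0 < q) (hpq : p + q < π / 2) :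
    tan p / p * (tan q / q) ≤ tan (p + q) / (p + q) := by
  have hp2 : p < π / 2 := by linarith
  have hq2 : q < π / 2 := by linarith
  have htp : 0 < tan p := tan_pos_of_pos_of_lt_pi_div_two hp hp2
  have htq : 0 < tan q := tan_pos_of_pos_of_lt_pi_div_two hq hq2
  have hprod : tan p * tan q < 1 := by
    have h := tan_lt_tan_of_lt_of_lt_pi_div_two (x := q) (y := π / 2 - p) (by linarith)
      (by linarith) (by linarith)
    rw [tan_pi_div_two_sub, ← one_div, lt_div_iff₀ htp] at h
    linarith
  have hFp := tan_mul_one_sub_sq_le hp hp2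
  have hFq := tan_mul_one_sub_sq_le hq hq2
  have hpq' : p * q ≤ tan p * tan q :=
    mul_le_mul (lt_tan hp hp2).le (lt_tan hq hq2).le hq.le htp.le
  rw [tan_add_of_cos_ne_zero (cos_pos_of_mem_Ioo ⟨by linarith, hp2⟩).ne'
      (cos_pos_of_mem_Ioo ⟨by linarith, hq2⟩).ne',
    div_mul_div_comm, div_div, div_le_div_iff₀ (by positivity)
      (mul_pos (by linarith) (by linarith))]
  nlinarith [mul_le_mul_of_nonneg_left hFq (mul_pos htp hp).le,
    mul_le_mul_of_nonneg_left hFp (mul_pos htq hq).le,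
    mul_le_mul_of_nonneg_left hpq' (mul_pos (mul_pos htp htq) (add_pos hp hq)).le]

theorem tan_mul_tan_div_lt {x y z : ℝ} (hx : 0 < x) (hy : 0 < y) (hz : 0 < z)
    (hxyz : x + y + z < π / 2) :
    tan y * tan z / (tan (x + y + z) * tan x) < y * z / ((x + y + z) * x) := by
  set h : ℝ → ℝ := fun t => tan t / t with hh
  have hyz : h y * h z ≤ h (y + z) := tan_div_mul_tan_div_le hy hz (by linarith)
  have hxyz' : h (y + z) * h x ≤ h (x + y + z) := by
    rw [show x + y + z = y + z + x by ring]
    exact tan_div_mul_tan_div_le (by linarith) hx (by linarith)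
  have hx1 : 1 < h x := (one_lt_div hx).2 (lt_tan hx (by linarith))
  have hpos : 0 < h (y + z) :=
    div_pos (tan_pos_of_pos_of_lt_pi_div_two (by linarith) (by linarith)) (by linarith)
  have key : h y * h z < h (x + y + z) * h x :=
    calc h y * h z ≤ h (y + z) := hyz
      _ < h (y + z) * h x * h x := by
        rw [mul_assoc]; exact lt_mul_of_one_lt_right hpos (one_lt_mul_of_lt_of_le hx1 hx1.le)
      _ ≤ h (x + y + z) * h x := by gcongr
  have hS : 0 < tan (x + y + z) := tan_pos_of_pos_of_lt_pi_div_two (by linarith) hxyz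
  have htx : 0 < tan x := tan_pos_of_pos_of_lt_pi_div_two hx (by linarith)
  simp only [hh] at key
  rw [div_lt_div_iff₀ (mul_pos hS htx) (by positivity)]
  rw [div_mul_div_comm, div_mul_div_comm, div_lt_div_iff₀ (by positivity) (by positivity)] at key
  linarith

structure IsTriangle (a b c : ℝ) : Prop where
  pos_a : 0 < a
  pos_b : 0 < b
  pos_c : 0 < c
  a_lt : a < b + c
  b_lt : b < c + a
  c_lt : c < a + b

structure IsSphTriangle (a b c : ℝ) : Prop extends IsTriangle a b c where
  add_lt_two_pi : a + b + c < 2 * π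

theorem angle_eq_planarAngle {V : Type*} [NormedAddCommGroup V] [InnerProductSpace ℝ V]
    (x y : V) : InnerProductGeometry.angle x y = planarAngle ‖x - y‖ ‖x‖ ‖y‖ := by
  rw [InnerProductGeometry.angle,
    real_inner_eq_norm_mul_self_add_norm_mul_self_sub_norm_sub_mul_self_div_two, planarAngle]
  congr 1
  ring

theorem one_sub_planarArg {a b c s : ℝ} (hb : b ≠ 0) (hc : c ≠ 0) (hs : a + b + c = 2 * s) :
    1 - (b ^ 2 + c ^ 2 - a ^ 2) / (2 * b * c) = 2 * (s - b) * (s - c) / (b * c) := by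
  rw [show a = 2 * s - b - c by linarith]
  field_simp
  ring

theorem one_add_planarArg {a b c s : ℝ} (hb : b ≠ 0) (hc : c ≠ 0) (hs : a + b + c = 2 * s) :
    1 + (b ^ 2 + c ^ 2 - a ^ 2) / (2 * b * c) = 2 * s * (s - a) / (b * c) := by
  rw [show a = 2 * s - b - c by linarith]
  field_simp
  ring

namespace IsTriangle

variable {a b c s : ℝ}

theorem rotate (h : IsTriangle a b c) : IsTriangle b c a :=
  ⟨h.pos_b, h.pos_c, h.pos_a, h.b_lt, h.c_lt, h.a_lt⟩

theorem exists_complex_norm_eq (h : IsTriangle a b c) :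
    ∃ x y : ℂ, ‖x‖ = b ∧ ‖y‖ = c ∧ ‖x - y‖ = a := by
  have := h.pos_a; have := h.pos_b; have := h.a_lt; have := h.b_lt; have := h.c_lt
  obtain ⟨p, hp⟩ : ∃ p, 2 * b * p = b ^ 2 + c ^ 2 - a ^ 2 :=
    ⟨_, mul_div_cancel₀ _ (by positivity)⟩
  have hpc : p ^ 2 ≤ c ^ 2 := by
    apply sq_le_sq'
    · nlinarith [mul_pos (by linarith : 0 < a + b + c) (by linarith : 0 < b + c - a)]
    · nlinarith [mul_pos (by linarith : 0 < a - b + c) (by linarith : 0 < a + b - c)]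
  refine ⟨b, ⟨p, √(c ^ 2 - p ^ 2)⟩, Complex.norm_of_nonneg h.pos_b.le, ?_, ?_⟩
  · rw [← sq_eq_sq₀ (norm_nonneg _) h.pos_c.le, Complex.sq_norm, Complex.normSq_mk,
      mul_self_sqrt (by linarith)]
    ring
  · rw [← sq_eq_sq₀ (norm_nonneg _) h.pos_a.le, Complex.sq_norm, Complex.normSq_apply]
    simp only [Complex.sub_re, Complex.ofReal_re, Complex.sub_im, Complex.ofReal_im]
    rw [zero_sub, neg_mul_neg, mul_self_sqrt (by linarith)]
    linear_combination -hp

theorem planarAngle_add_planarAngle_add_planarAngle (h : IsTriangle a b c) :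
    planarAngle a b c + planarAngle b c a + planarAngle c a b = π := by
  obtain ⟨x, y, hx, hy, hxy⟩ := h.exists_complex_norm_eq
  have hy0 : y ≠ 0 := norm_ne_zero_iff.mp (hy ▸ h.pos_c.ne')
  have hsum := InnerProductGeometry.angle_add_angle_sub_add_angle_sub_eq_pi x hy0
  rw [InnerProductGeometry.angle_comm x (x - y), angle_eq_planarAngle, angle_eq_planarAngle,
    angle_eq_planarAngle, sub_sub_cancel_left, sub_sub_cancel, norm_neg, norm_sub_rev y x,
    hx, hy, hxy] at hsum
  linarith

theorem planarArg_mem_Ioo (h : IsTriangle a b c) :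
    (b ^ 2 + c ^ 2 - a ^ 2) / (2 * b * c) ∈ Ioo (-1) 1 := by
  obtain ⟨s, hs⟩ : ∃ s, a + b + c = 2 * s := ⟨(a + b + c) / 2, by ring⟩
  have hb := h.pos_b; have hc := h.pos_c
  have h₁ : 0 < 2 * (s - b) * (s - c) / (b * c) :=
    div_pos (mul_pos (mul_pos two_pos (by linarith [h.b_lt])) (by linarith [h.c_lt]))
      (by positivity)
  have h₂ : 0 < 2 * s * (s - a) / (b * c) :=
    div_pos (mul_pos (mul_pos two_pos (by linarith [h.pos_a])) (by linarith [h.a_lt]))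
      (by positivity)
  constructor
  · linarith [one_add_planarArg hb.ne' hc.ne' hs]
  · linarith [one_sub_planarArg hb.ne' hc.ne' hs]

theorem planarAngle_mem_Ioo (h : IsTriangle a b c) : planarAngle a b c ∈ Ioo 0 π :=
  ⟨arccos_pos.2 h.planarArg_mem_Ioo.2, arccos_lt_pi.2 h.planarArg_mem_Ioo.1⟩

theorem tan_sq_half_planarAngle (h : IsTriangle a b c) (hs : a + b + c = 2 * s) :
    tan (planarAngle a b c / 2) ^ 2 = (s - b) * (s - c) / (s * (s - a)) := by
  have hb := h.pos_b.ne'; have hc := h.pos_c.ne'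
  rw [tan_half_sq, planarAngle, cos_arccos h.planarArg_mem_Ioo.1.le h.planarArg_mem_Ioo.2.le,
    one_sub_planarArg hb hc hs, one_add_planarArg hb hc hs]
  field_simp

end IsTriangle

theorem sin_mul_sin_add_cos_sub_cos_mul_cos {a b c s : ℝ} (hs : a + b + c = 2 * s) :
    sin b * sin c + (cos a - cos b * cos c) = 2 * sin s * sin (s - a) := by
  have h := cos_sub_cos a (b + c)
  rw [cos_add, show (a + (b + c)) / 2 = s by linarith,
    show (a - (b + c)) / 2 = -(s - a) by linarith, sin_neg] at h
  linarith

theorem sin_mul_sin_sub_cos_sub_cos_mul_cos {a b c s : ℝ} (hs : a + b + c = 2 * s) :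
    sin b * sin c - (cos a - cos b * cos c) = 2 * sin (s - b) * sin (s - c) := by
  have h := cos_sub_cos (b - c) a
  rw [cos_sub, show (b - c + a) / 2 = s - c by linarith,
    show (b - c - a) / 2 = -(s - b) by linarith, sin_neg] at h
  linarith

noncomputable def sphExcess (a b c : ℝ) : ℝ :=
  sphAngle a b c + sphAngle b c a + sphAngle c a b - π

namespace IsSphTriangle

variable {a b c s : ℝ}

theorem rotate (h : IsSphTriangle a b c) : IsSphTriangle b c a :=
  ⟨h.toIsTriangle.rotate, by linarith [h.add_lt_two_pi]⟩

theorem side_mem_Ioo (h : IsSphTriangle a b c) : a ∈ Ioo 0 π :=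
  ⟨h.pos_a, by linarith [h.a_lt, h.add_lt_two_pi]⟩

theorem half_perimeter_mem_Ioo (h : IsSphTriangle a b c) (hs : a + b + c = 2 * s) :
    s ∈ Ioo 0 π :=
  ⟨by linarith [h.pos_a, h.pos_b, h.pos_c], by linarith [h.add_lt_two_pi]⟩

theorem half_perimeter_sub_mem_Ioo (h : IsSphTriangle a b c) (hs : a + b + c = 2 * s) :
    s - a ∈ Ioo 0 π :=
  ⟨by linarith [h.a_lt], by linarith [h.add_lt_two_pi, h.pos_a]⟩

theorem sin_pos (h : IsSphTriangle a b c) : 0 < sin a :=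
  sin_pos_of_mem_Ioo h.side_mem_Ioo

theorem sin_mul_sin_pos (h : IsSphTriangle a b c) : 0 < sin b * sin c :=
  mul_pos h.rotate.sin_pos h.rotate.rotate.sin_pos

theorem sphArg_mem_Ioo (h : IsSphTriangle a b c) :
    (cos a - cos b * cos c) / (sin b * sin c) ∈ Ioo (-1) 1 := by
  obtain ⟨s, hs⟩ : ∃ s, a + b + c = 2 * s := ⟨(a + b + c) / 2, by ring⟩
  have hplus := sin_mul_sin_add_cos_sub_cos_mul_cos hs
  have hminus := sin_mul_sin_sub_cos_sub_cos_mul_cos hs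
  have hsb := h.rotate.half_perimeter_sub_mem_Ioo (s := s) (by linarith)
  have hsc := h.rotate.rotate.half_perimeter_sub_mem_Ioo (s := s) (by linarith)
  have h₁ := mul_pos (sin_pos_of_mem_Ioo (h.half_perimeter_mem_Ioo hs))
    (sin_pos_of_mem_Ioo (h.half_perimeter_sub_mem_Ioo hs))
  have h₂ := mul_pos (sin_pos_of_mem_Ioo hsb) (sin_pos_of_mem_Ioo hsc)
  rw [Set.mem_Ioo, lt_div_iff₀ h.sin_mul_sin_pos, div_lt_iff₀ h.sin_mul_sin_pos]
  constructor <;> linarith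

theorem sphAngle_mem_Ioo (h : IsSphTriangle a b c) : sphAngle a b c ∈ Ioo 0 π :=
  ⟨arccos_pos.2 h.sphArg_mem_Ioo.2, arccos_lt_pi.2 h.sphArg_mem_Ioo.1⟩

theorem cos_sphAngle (h : IsSphTriangle a b c) :
    cos (sphAngle a b c) = (cos a - cos b * cos c) / (sin b * sin c) :=
  cos_arccos h.sphArg_mem_Ioo.1.le h.sphArg_mem_Ioo.2.le

theorem cos_sq_half_sphAngle (h : IsSphTriangle a b c) (hs : a + b + c = 2 * s) :
    cos (sphAngle a b c / 2) ^ 2 = sin s * sin (s - a) / (sin b * sin c) := by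
  have := h.rotate.sin_pos.ne'; have := h.rotate.rotate.sin_pos.ne'
  rw [cos_sq_half_eq, h.cos_sphAngle]
  field_simp
  linear_combination sin_mul_sin_add_cos_sub_cos_mul_cos hs

theorem sin_sq_half_sphAngle (h : IsSphTriangle a b c) (hs : a + b + c = 2 * s) :
    sin (sphAngle a b c / 2) ^ 2 = sin (s - b) * sin (s - c) / (sin b * sin c) := by
  have := h.rotate.sin_pos.ne'; have := h.rotate.rotate.sin_pos.ne'
  rw [sin_sq_half_eq, h.cos_sphAngle]
  field_simp
  linear_combination sin_mul_sin_sub_cos_sub_cos_mul_cos hs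

theorem cos_sq_half_sphAngle_mul (h : IsSphTriangle a b c) :
    cos (sphAngle a b c / 2) ^ 2 * (cos ((b - c) / 2) ^ 2 - cos ((b + c) / 2) ^ 2) =
      cos (a / 2) ^ 2 - cos ((b + c) / 2) ^ 2 := by
  obtain ⟨s, hs⟩ : ∃ s, a + b + c = 2 * s := ⟨(a + b + c) / 2, by ring⟩
  rw [← sin_mul_sin_eq_cos_sq_sub_cos_sq b c, h.cos_sq_half_sphAngle hs,
    div_mul_cancel₀ _ h.sin_mul_sin_pos.ne', sin_mul_sin_eq_cos_sq_sub_cos_sq,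
    show (s - (s - a)) / 2 = a / 2 by ring, show (s + (s - a)) / 2 = (b + c) / 2 by linarith]

theorem sin_sq_half_sphAngle_mul (h : IsSphTriangle a b c) :
    sin (sphAngle a b c / 2) ^ 2 * (cos ((b - c) / 2) ^ 2 - cos ((b + c) / 2) ^ 2) =
      cos ((b - c) / 2) ^ 2 - cos (a / 2) ^ 2 := by
  obtain ⟨s, hs⟩ : ∃ s, a + b + c = 2 * s := ⟨(a + b + c) / 2, by ring⟩
  rw [← sin_mul_sin_eq_cos_sq_sub_cos_sq b c, h.sin_sq_half_sphAngle hs,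
    div_mul_cancel₀ _ h.sin_mul_sin_pos.ne', mul_comm, sin_mul_sin_eq_cos_sq_sub_cos_sq,
    show (s - c - (s - b)) / 2 = (b - c) / 2 by ring,
    show (s - c + (s - b)) / 2 = a / 2 by linarith]

theorem sin_half_sphAngle_mul_sin (h : IsSphTriangle a b c) (hs : a + b + c = 2 * s) :
    sin (sphAngle a b c / 2) * sin s =
      cos (sphAngle b c a / 2) * cos (sphAngle c a b / 2) * sin a := by
  have := h.sin_pos.ne'; have := h.rotate.sin_pos.ne'; have := h.rotate.rotate.sin_pos.ne'
  rw [← sq_eq_sq₀ (mul_pos (sin_half_pos_of_mem_Ioo h.sphAngle_mem_Ioo)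
      (sin_pos_of_mem_Ioo (h.half_perimeter_mem_Ioo hs))).le
    (mul_pos (mul_pos (cos_half_pos_of_mem_Ioo h.rotate.sphAngle_mem_Ioo)
      (cos_half_pos_of_mem_Ioo h.rotate.rotate.sphAngle_mem_Ioo)) h.sin_pos).le,
    mul_pow, mul_pow, mul_pow, h.sin_sq_half_sphAngle hs,
    h.rotate.cos_sq_half_sphAngle (by linarith), h.rotate.rotate.cos_sq_half_sphAngle (by linarith)]
  field_simp

theorem sin_add_half_sphAngle_mul_cos (h : IsSphTriangle a b c) :
    sin ((sphAngle b c a + sphAngle c a b) / 2) * cos (a / 2) =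
      cos (sphAngle a b c / 2) * cos ((b - c) / 2) := by
  obtain ⟨s, hs⟩ : ∃ s, a + b + c = 2 * s := ⟨(a + b + c) / 2, by ring⟩
  have hβ := h.rotate.sin_half_sphAngle_mul_sin (s := s) (by linarith)
  have hγ := h.rotate.rotate.sin_half_sphAngle_mul_sin (s := s) (by linarith)
  have hcβ := h.rotate.cos_sq_half_sphAngle (s := s) (by linarith)
  have hcγ := h.rotate.rotate.cos_sq_half_sphAngle (s := s) (by linarith)
  rw [eq_div_iff (mul_pos h.rotate.rotate.sin_pos h.sin_pos).ne'] at hcβ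
  rw [eq_div_iff (mul_pos h.sin_pos h.rotate.sin_pos).ne'] at hcγ
  have hsum : sin ((sphAngle b c a + sphAngle c a b) / 2) * sin a =
      cos (sphAngle a b c / 2) * (sin (s - b) + sin (s - c)) := by
    apply mul_right_cancel₀ (sin_pos_of_mem_Ioo (h.half_perimeter_mem_Ioo hs)).ne'
    rw [add_div, sin_add]
    linear_combination sin a * cos (sphAngle c a b / 2) * hβ
      + sin a * cos (sphAngle b c a / 2) * hγ + cos (sphAngle a b c / 2) * hcγ
      + cos (sphAngle a b c / 2) * hcβ
  rw [sin_add_sin, show (s - b + (s - c)) / 2 = a / 2 by linarith,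
    show (s - b - (s - c)) / 2 = -((b - c) / 2) by ring, cos_neg,
    sin_eq_two_mul_sin_half_mul_cos_half a] at hsum
  apply mul_left_cancel₀ (mul_pos two_pos (sin_half_pos_of_mem_Ioo h.side_mem_Ioo)).ne'
  linear_combination hsum

theorem cos_add_half_sphAngle_mul_cos (h : IsSphTriangle a b c) :
    cos ((sphAngle b c a + sphAngle c a b) / 2) * cos (a / 2) =
      sin (sphAngle a b c / 2) * cos ((b + c) / 2) := by
  obtain ⟨s, hs⟩ : ∃ s, a + b + c = 2 * s := ⟨(a + b + c) / 2, by ring⟩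
  have hα := h.sin_half_sphAngle_mul_sin hs
  have hβ := h.rotate.sin_half_sphAngle_mul_sin (s := s) (by linarith)
  have hγ := h.rotate.rotate.sin_half_sphAngle_mul_sin (s := s) (by linarith)
  have hcα := h.cos_sq_half_sphAngle hs
  rw [eq_div_iff (mul_pos h.rotate.sin_pos h.rotate.rotate.sin_pos).ne'] at hcα
  have hdiff : cos ((sphAngle b c a + sphAngle c a b) / 2) * sin a =
      sin (sphAngle a b c / 2) * (sin s - sin (s - a)) := by
    apply mul_right_cancel₀ (pow_ne_zero 2 (sin_pos_of_mem_Ioo (h.half_perimeter_mem_Ioo hs)).ne')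
    rw [add_div, cos_add]
    linear_combination (-(sin s) ^ 2 + sin s * sin (s - a)) * hα
      - sin a * sin (sphAngle c a b / 2) * sin s * hβ
      - sin a * cos (sphAngle c a b / 2) * cos (sphAngle a b c / 2) * sin b * hγ
      - sin a * cos (sphAngle b c a / 2) * cos (sphAngle c a b / 2) * hcα
  rw [sin_sub_sin, show (s - (s - a)) / 2 = a / 2 by ring,
    show (s + (s - a)) / 2 = (b + c) / 2 by linarith,
    sin_eq_two_mul_sin_half_mul_cos_half a] at hdiff
  apply mul_left_cancel₀ (mul_pos two_pos (sin_half_pos_of_mem_Ioo h.side_mem_Ioo)).ne'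
  linear_combination hdiff

theorem tan_sq_half_sphAngle_sub_half_sphExcess_eq_cos (h : IsSphTriangle a b c) :
    tan ((sphAngle a b c - sphExcess a b c / 2) / 2) ^ 2 =
      (cos ((b - c) / 2) - cos (a / 2)) * (cos (a / 2) + cos ((b + c) / 2)) /
        ((cos ((b - c) / 2) + cos (a / 2)) * (cos (a / 2) - cos ((b + c) / 2))) := by
  set c₁ := cos (a / 2)
  set c₂ := cos ((b - c) / 2)
  set c₃ := cos ((b + c) / 2)
  have hbc : c₂ ^ 2 - c₃ ^ 2 ≠ 0 := by
    rw [← sin_mul_sin_eq_cos_sq_sub_cos_sq]; exact h.sin_mul_sin_pos.ne'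
  have hK : c₁ * (c₂ ^ 2 - c₃ ^ 2) ≠ 0 :=
    mul_ne_zero (cos_half_pos_of_mem_Ioo h.side_mem_Ioo).ne' hbc
  have hc₂₃ : c₂ + c₃ ≠ 0 := fun h₀ => hbc (by linear_combination (c₂ - c₃) * h₀)
  have hcos := h.cos_sq_half_sphAngle_mul
  have hsin := h.sin_sq_half_sphAngle_mul
  have hP := h.sin_add_half_sphAngle_mul_cos
  have hQ := h.cos_add_half_sphAngle_mul_cos
  set σ := sin ((sphAngle b c a + sphAngle c a b) / 2 - sphAngle a b c / 2)
  -- Delambre's analogies give `c₁ σ = c₂ cos² (α / 2) - c₃ sin² (α / 2)`; then `1 ∓ σ` factor.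
  have hminus : (1 - σ) * (c₁ * (c₂ ^ 2 - c₃ ^ 2)) = (c₂ - c₁) * (c₁ + c₃) * (c₂ + c₃) := by
    simp only [σ, sin_sub]
    linear_combination (-(c₂ ^ 2 - c₃ ^ 2) * cos (sphAngle a b c / 2)) * hP
      + ((c₂ ^ 2 - c₃ ^ 2) * sin (sphAngle a b c / 2)) * hQ - c₂ * hcos + c₃ * hsin
  have hplus : (1 + σ) * (c₁ * (c₂ ^ 2 - c₃ ^ 2)) = (c₂ + c₁) * (c₁ - c₃) * (c₂ + c₃) := by
    simp only [σ, sin_sub]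
    linear_combination ((c₂ ^ 2 - c₃ ^ 2) * cos (sphAngle a b c / 2)) * hP
      - ((c₂ ^ 2 - c₃ ^ 2) * sin (sphAngle a b c / 2)) * hQ + c₂ * hcos - c₃ * hsin
  have hθ : sphAngle a b c - sphExcess a b c / 2 =
      π / 2 - ((sphAngle b c a + sphAngle c a b) / 2 - sphAngle a b c / 2) := by
    unfold sphExcess; ring
  rw [tan_half_sq, hθ, cos_pi_div_two_sub, ← mul_div_mul_right _ _ hK, hminus, hplus,
    mul_div_mul_right _ _ hc₂₃]

theorem tan_sq_half_sphAngle_sub_half_sphExcess (h : IsSphTriangle a b c)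
    (hs : a + b + c = 2 * s) :
    tan ((sphAngle a b c - sphExcess a b c / 2) / 2) ^ 2 =
      tan ((s - b) / 2) * tan ((s - c) / 2) / (tan (s / 2) * tan ((s - a) / 2)) := by
  have d₁ := cos_sub_sub_cos_add ((s - c) / 2) ((s - b) / 2)
  have d₂ := cos_sub_add_cos_add ((s - c) / 2) ((s - b) / 2)
  have d₃ := cos_sub_sub_cos_add (s / 2) ((s - a) / 2)
  have d₄ := cos_sub_add_cos_add (s / 2) ((s - a) / 2)
  rw [show (s - c) / 2 - (s - b) / 2 = (b - c) / 2 by ring,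
    show (s - c) / 2 + (s - b) / 2 = a / 2 by linarith] at d₁ d₂
  rw [show s / 2 - (s - a) / 2 = a / 2 by ring,
    show s / 2 + (s - a) / 2 = (b + c) / 2 by linarith] at d₃ d₄
  have hsb := h.rotate.half_perimeter_sub_mem_Ioo (s := s) (by linarith)
  have hsc := h.rotate.rotate.half_perimeter_sub_mem_Ioo (s := s) (by linarith)
  have := cos_half_pos_of_mem_Ioo (h.half_perimeter_mem_Ioo hs)
  have := cos_half_pos_of_mem_Ioo (h.half_perimeter_sub_mem_Ioo hs)
  have := cos_half_pos_of_mem_Ioo hsb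
  have := cos_half_pos_of_mem_Ioo hsc
  rw [h.tan_sq_half_sphAngle_sub_half_sphExcess_eq_cos, d₁, d₂, d₃, d₄]
  simp only [tan_eq_sin_div_cos]
  field_simp

end IsSphTriangle

/-- **Lemma 1s** of Nazarov–Petrov (spherical–planar angle comparison): if `a`, `b`, `c` are
the side lengths of a nondegenerate spherical triangle with `a + b + c < 2π`, with spherical
angles `α, β, γ` and planar comparison angles `α', β', γ'`, then
`α − α' < (β − β') + (γ − γ')`. -/
theorem spherical_planar_angle_comparison (a b c : ℝ)
    (ha : 0 < a) (hb : 0 < b) (hc : 0 < c)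
    (habc : a < b + c) (hbca : b < c + a) (hcab : c < a + b)
    (hsum : a + b + c < 2 * π) :
    sphAngle a b c - planarAngle a b c <
      (sphAngle b c a - planarAngle b c a) + (sphAngle c a b - planarAngle c a b) := by
  have h : IsSphTriangle a b c := ⟨⟨ha, hb, hc, habc, hbca, hcab⟩, hsum⟩
  suffices hlt : sphAngle a b c - sphExcess a b c / 2 < planarAngle a b c by
    have := h.toIsTriangle.planarAngle_add_planarAngle_add_planarAngle
    unfold sphExcess at hlt
    linarith
  have hα' := h.toIsTriangle.planarAngle_mem_Ioo
  rcases le_or_gt (sphAngle a b c - sphExcess a b c / 2) 0 with hθ | hθ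
  · linarith [hα'.1]
  have hθπ : sphAngle a b c - sphExcess a b c / 2 < π := by
    unfold sphExcess
    linarith [h.sphAngle_mem_Ioo.2, h.rotate.sphAngle_mem_Ioo.1, h.rotate.rotate.sphAngle_mem_Ioo.1]
  obtain ⟨s, hs⟩ : ∃ s, a + b + c = 2 * s := ⟨(a + b + c) / 2, by ring⟩
  refine (strictMonoOn_tan_half_sq.lt_iff_lt ⟨hθ.le, hθπ⟩ ⟨hα'.1.le, hα'.2⟩).1 ?_
  have key := tan_mul_tan_div_lt (x := (s - a) / 2) (y := (s - b) / 2) (z := (s - c) / 2)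
    (by linarith) (by linarith) (by linarith) (by linarith)
  rw [show (s - a) / 2 + (s - b) / 2 + (s - c) / 2 = s / 2 by linarith] at key
  rw [h.tan_sq_half_sphAngle_sub_half_sphExcess hs, h.tan_sq_half_planarAngle hs]
  rwa [div_mul_div_comm, div_mul_div_comm, div_div_div_cancel_right₀ (by norm_num)] at key
end

section
/- Define f : [0, π/2) → ℝ by f(0) = 1 and f(x) = x · cos x / sin x for x > 0 (with f(π/2) = 0). For all X ∈ [0, π/2) and Y, Z ∈ (0, π/2) with X + Y + Z ≤ π/2, one has f(Y) · f(Z) > f(X) · f(X + Y + Z). -/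
open Real

/-- The function `f(x) = x · cot x`, extended by `f(0) = 1`. -/
noncomputable def xCot (x : ℝ) : ℝ :=
  if x = 0 then 1 else x * Real.cos x / Real.sin x

/-!
Writing `u = f a`, `v = f b`, the addition formula for the cotangent becomes
`f (a + b) = (a + b) (u v - a b) / (b u + a v)`. On `(0, π/2)` one has `1 - x² < f x ≤ 1`,
and these bounds alone force `f (a + b) < f a · f b`. The theorem follows by applying this
strict submultiplicativity twice, `f(X) f(X + Y + Z) ≤ f(X + Y + Z) < f(X) f(Y + Z) ≤ f(Y + Z)
< f(Y) f(Z)`, using only `0 ≤ f ≤ 1` in between.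
-/

open Set

@[simp]
lemma xCot_zero : xCot 0 = 1 := if_pos rfl

lemma xCot_of_ne_zero {x : ℝ} (hx : x ≠ 0) : xCot x = x * cos x / sin x := if_neg hx

lemma xCot_add {a b : ℝ} (ha : sin a ≠ 0) (hb : sin b ≠ 0) (hab : sin (a + b) ≠ 0) :
    xCot (a + b) = (a + b) * (xCot a * xCot b - a * b) / (b * xCot a + a * xCot b) := by
  have ha0 : a ≠ 0 := by rintro rfl; simp at ha
  have hb0 : b ≠ 0 := by rintro rfl; simp at hb
  have hab0 : a + b ≠ 0 := by intro h; simp [h] at hab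
  have hden : b * xCot a + a * xCot b = a * b * sin (a + b) / (sin a * sin b) := by
    rw [xCot_of_ne_zero ha0, xCot_of_ne_zero hb0, sin_add]
    field_simp
    ring
  rw [hden, xCot_of_ne_zero hab0, xCot_of_ne_zero ha0, xCot_of_ne_zero hb0, cos_add]
  field_simp

lemma xCot_pos {x : ℝ} (hx : x ∈ Ioo 0 (π / 2)) : 0 < xCot x := by
  have hsin : 0 < sin x := sin_pos_of_pos_of_lt_pi hx.1 (by linarith [pi_pos, hx.2])
  have hcos : 0 < cos x := cos_pos_of_mem_Ioo ⟨by linarith [pi_pos, hx.1], hx.2⟩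
  rw [xCot_of_ne_zero hx.1.ne']
  exact div_pos (mul_pos hx.1 hcos) hsin

lemma xCot_nonneg {x : ℝ} (hx : x ∈ Icc 0 (π / 2)) : 0 ≤ xCot x := by
  rcases hx.1.eq_or_lt with rfl | hx0
  · simp
  have hsin : 0 < sin x := sin_pos_of_pos_of_lt_pi hx0 (by linarith [pi_pos, hx.2])
  have hcos : 0 ≤ cos x := cos_nonneg_of_mem_Icc ⟨by linarith [pi_pos], hx.2⟩
  rw [xCot_of_ne_zero hx0.ne']
  exact div_nonneg (mul_nonneg hx0.le hcos) hsin.le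

lemma xCot_le_one {x : ℝ} (hx : x ∈ Ico 0 (π / 2)) : xCot x ≤ 1 := by
  rcases hx.1.eq_or_lt with rfl | hx0
  · simp
  have hsin : 0 < sin x := sin_pos_of_pos_of_lt_pi hx0 (by linarith [pi_pos, hx.2])
  have hcos : 0 < cos x := cos_pos_of_mem_Ioo ⟨by linarith [pi_pos], hx.2⟩
  have htan : x < sin x / cos x := tan_eq_sin_div_cos x ▸ lt_tan hx0 hx.2
  rw [xCot_of_ne_zero hx0.ne', div_le_one hsin]
  exact ((lt_div_iff₀ hcos).mp htan).le

lemma one_sub_sq_lt_xCot {x : ℝ} (hx : x ∈ Ioo 0 (π / 2)) : 1 - x ^ 2 < xCot x := by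
  have hsin : 0 < sin x := sin_pos_of_pos_of_lt_pi hx.1 (by linarith [pi_pos, hx.2])
  have hcos : 0 < cos x := cos_pos_of_mem_Ioo ⟨by linarith [pi_pos, hx.1], hx.2⟩
  rw [xCot_of_ne_zero hx.1.ne', lt_div_iff₀ hsin]
  rcases le_or_gt 1 (x ^ 2) with hx1 | hx1
  · nlinarith [mul_pos hx.1 hcos]
  · -- `x cos x - (1 - x²) sin x = x (cos x - 1 + x²/2) + (1 - x²)(x - sin x) + x³/2`
    nlinarith [one_sub_sq_div_two_lt_cos hx.1.ne', sin_lt hx.1, pow_pos hx.1 3]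

lemma xCot_add_lt_mul {a b : ℝ} (ha : a ∈ Ioo 0 (π / 2)) (hb : b ∈ Ioo 0 (π / 2)) :
    xCot (a + b) < xCot a * xCot b := by
  have hsin {x : ℝ} (hx : 0 < x) (hx' : x < π) : sin x ≠ 0 := (sin_pos_of_pos_of_lt_pi hx hx').ne'
  have hπ := pi_pos
  rw [xCot_add (hsin ha.1 (by linarith [ha.2])) (hsin hb.1 (by linarith [hb.2]))
    (hsin (by linarith [ha.1, hb.1]) (by linarith [ha.2, hb.2]))]
  have hu := xCot_pos ha
  have hv := xCot_pos hb
  have hu1 := xCot_le_one (Ioo_subset_Ico_self ha)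
  have hv1 := xCot_le_one (Ioo_subset_Ico_self hb)
  have hua := one_sub_sq_lt_xCot ha
  have hvb := one_sub_sq_lt_xCot hb
  have huv : xCot a * xCot b ≤ 1 := mul_le_one₀ hu1 hv.le hv1
  rw [div_lt_iff₀ (by nlinarith [ha.1, hb.1])]
  -- with `u = f a`, `v = f b` the difference of the two sides is
  -- `a (1 - u v)(1 - v) + b (1 - u v)(1 - u) + a (b² - (1 - v)) + b (a² - (1 - u))`
  nlinarith [mul_nonneg (mul_nonneg ha.1.le (sub_nonneg.2 huv)) (sub_nonneg.2 hv1),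
    mul_nonneg (mul_nonneg hb.1.le (sub_nonneg.2 huv)) (sub_nonneg.2 hu1),
    mul_lt_mul_of_pos_left (show 1 - xCot b < b ^ 2 by linarith) ha.1,
    mul_lt_mul_of_pos_left (show 1 - xCot a < a ^ 2 by linarith) hb.1]

/-- Inequality `(4_s)` of Nazarov–Petrov: for `X ∈ [0, π/2)`, `Y, Z ∈ (0, π/2)` with
`X + Y + Z ≤ π/2`, one has `f(Y)·f(Z) > f(X)·f(X + Y + Z)` where `f(x) = x·cot x`,
`f(0) = 1`. -/
theorem xcot_product_inequality (X Y Z : ℝ)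
    (hX : X ∈ Set.Ico 0 (π / 2)) (hY : Y ∈ Set.Ioo 0 (π / 2)) (hZ : Z ∈ Set.Ioo 0 (π / 2))
    (hsum : X + Y + Z ≤ π / 2) :
    xCot Y * xCot Z > xCot X * xCot (X + Y + Z) := by
  rcases hX.1.eq_or_lt with rfl | hX0
  · simpa using xCot_add_lt_mul hY hZ
  have hYZ : Y + Z ∈ Ioo 0 (π / 2) := ⟨by linarith [hY.1, hZ.1], by linarith [hX0]⟩
  calc xCot X * xCot (X + Y + Z)
      ≤ xCot (X + (Y + Z)) := by
        rw [← add_assoc]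
        exact mul_le_of_le_one_left (xCot_nonneg ⟨by linarith [hYZ.1], hsum⟩) (xCot_le_one hX)
    _ < xCot X * xCot (Y + Z) := xCot_add_lt_mul ⟨hX0, hX.2⟩ hYZ
    _ ≤ xCot (Y + Z) := mul_le_of_le_one_left (xCot_pos hYZ).le (xCot_le_one hX)
    _ < xCot Y * xCot Z := xCot_add_lt_mul hY hZ
end

section
/- For all Y, Z ∈ (0, π/2) with Y + Z ≤ π/2, one has (Y · cos Y / sin Y) · (Z · cos Z / sin Z) > (Y + Z) · cos(Y + Z) / sin(Y + Z). -/
/-!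
Write `u = Y cot Y`, `v = Z cot Z`, `w = (Y + Z) cot (Y + Z)`. The cotangent addition formula
`cot (Y + Z) (cot Y + cot Z) = cot Y cot Z - 1` becomes
`(Y + Z) (u v - w) = Y Z (Y + Z) - w b` with `b = (Y + Z) - (Z u + Y v)`.
The elementary bound `x cot x > 1 - x²` on `(0, π/2)` gives `b < Y Z (Y + Z)`, and since
`0 ≤ w ≤ 1` also `w b < Y Z (Y + Z)`, i.e. `u v > w`.
-/

open Real

noncomputable def xcot (x : ℝ) : ℝ := x * cos x / sin x

lemma one_sub_sq_lt_xcot {x : ℝ} (hx0 : 0 < x) (hx : x < π / 2) : 1 - x ^ 2 < xcot x := by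
  have hsin : 0 < sin x := sin_pos_of_pos_of_lt_pi hx0 (by linarith [pi_pos])
  have hcos : 0 < cos x := cos_pos_of_mem_Ioo ⟨by linarith, hx⟩
  rw [xcot, lt_div_iff₀ hsin]
  rcases le_or_gt 1 x with h1 | h1
  · nlinarith [mul_pos hx0 hcos, mul_nonneg (by nlinarith : 0 ≤ x ^ 2 - 1) hsin.le]
  · have := sin_lt hx0
    have := one_sub_sq_div_two_le_cos (x := x)
    nlinarith

lemma xcot_nonneg {x : ℝ} (hx0 : 0 ≤ x) (hx : x ≤ π / 2) : 0 ≤ xcot x :=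
  div_nonneg (mul_nonneg hx0 (cos_nonneg_of_mem_Icc ⟨by linarith [pi_pos], hx⟩))
    (sin_nonneg_of_nonneg_of_le_pi hx0 (by linarith [pi_pos]))

lemma xcot_le_one {x : ℝ} (hx0 : 0 < x) (hx : x ≤ π / 2) : xcot x ≤ 1 := by
  have hsin : 0 < sin x := sin_pos_of_pos_of_lt_pi hx0 (by linarith [pi_pos])
  rw [xcot, div_le_one hsin]
  rcases hx.lt_or_eq with hx | rfl
  · have hcos : 0 < cos x := cos_pos_of_mem_Ioo ⟨by linarith, hx⟩
    have := lt_tan hx0 hx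
    rw [tan_eq_sin_div_cos, lt_div_iff₀ hcos] at this
    linarith
  · simp

lemma xcot_add_mul {x y : ℝ} (hx : sin x ≠ 0) (hy : sin y ≠ 0) (hxy : sin (x + y) ≠ 0) :
    xcot (x + y) * (y * xcot x + x * xcot y) = (x + y) * (xcot x * xcot y - x * y) := by
  simp only [xcot]
  field_simp
  rw [sin_add, cos_add]
  ring

/-- Inequality `(5_s)` of Nazarov–Petrov: for `Y, Z ∈ (0, π/2)` with `Y + Z ≤ π/2`, one has
`(Y·cot Y)·(Z·cot Z) > (Y + Z)·cot(Y + Z)`. -/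
theorem xcot_superadditive (Y Z : ℝ)
    (hY : Y ∈ Set.Ioo 0 (π / 2)) (hZ : Z ∈ Set.Ioo 0 (π / 2)) (hsum : Y + Z ≤ π / 2) :
    (Y * Real.cos Y / Real.sin Y) * (Z * Real.cos Z / Real.sin Z) >
      (Y + Z) * Real.cos (Y + Z) / Real.sin (Y + Z) := by
  obtain ⟨hY0, hY⟩ := hY
  obtain ⟨hZ0, hZ⟩ := hZ
  have hYZ : 0 < Y + Z := by linarith
  have sin_ne {x : ℝ} (h0 : 0 < x) (h : x ≤ π / 2) : sin x ≠ 0 :=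
    (sin_pos_of_pos_of_lt_pi h0 (by linarith [pi_pos])).ne'
  have hadd := xcot_add_mul (sin_ne hY0 hY.le) (sin_ne hZ0 hZ.le) (sin_ne hYZ hsum)
  have hu := one_sub_sq_lt_xcot hY0 hY
  have hv := one_sub_sq_lt_xcot hZ0 hZ
  have hw0 := xcot_nonneg hYZ.le hsum
  have hw1 := xcot_le_one hYZ hsum
  change xcot (Y + Z) < xcot Y * xcot Z
  set b := Y + Z - (Z * xcot Y + Y * xcot Z)
  have hb : b < Y * Z * (Y + Z) := by nlinarith
  have hwb : xcot (Y + Z) * b < Y * Z * (Y + Z) := by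
    rcases le_or_gt b 0 with hb0 | hb0
    · nlinarith [mul_pos (mul_pos hY0 hZ0) hYZ]
    · nlinarith
  nlinarith
end

section
/- The function x ↦ log(x · cos x / sin x) is strictly concave on the open interval (0, π/2). -/
open Real Set

/-!
Writing `f x = log x + log (cos x) - log (sin x)`, one finds
`f'' x = 1 / sin x ^ 2 - 1 / cos x ^ 2 - 1 / x ^ 2 = cot x ^ 2 - tan x ^ 2 - 1 / x ^ 2`,
which is negative on `(0, π/2)` because `x < tan x` there, i.e. `cot x < 1 / x`.
-/

theorem strictConcaveOn_of_hasDerivAt2_neg {D : Set ℝ} (hD : Convex ℝ D) (hDo : IsOpen D)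
    {f f' f'' : ℝ → ℝ} (hf : ∀ x ∈ D, HasDerivAt f (f' x) x)
    (hf' : ∀ x ∈ D, HasDerivAt f' (f'' x) x) (hf'' : ∀ x ∈ D, f'' x < 0) :
    StrictConcaveOn ℝ D f := by
  have hanti : StrictAntiOn f' D := by
    refine strictAntiOn_of_hasDerivWithinAt_neg hD
      (fun x hx => (hf' x hx).continuousAt.continuousWithinAt) (fun x hx => ?_)
      (fun x hx => hf'' x (interior_subset hx))
    exact (hf' x (interior_subset hx)).hasDerivWithinAt
  refine StrictAntiOn.strictConcaveOn_of_deriv hD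
    (fun x hx => (hf x hx).continuousAt.continuousWithinAt) ?_
  rw [hDo.interior_eq]
  exact hanti.congr fun x hx => ((hf x hx).deriv).symm

namespace Real

theorem hasDerivAt_log_mul_cos_div_sin {x : ℝ} (hx : x ≠ 0) (hc : cos x ≠ 0) (hs : sin x ≠ 0) :
    HasDerivAt (fun y => log (y * cos y / sin y)) (x⁻¹ - sin x / cos x - cos x / sin x) x := by
  have h := (((hasDerivAt_id x).mul (hasDerivAt_cos x)).div (hasDerivAt_sin x) hs).log
    (by simp [hx, hc, hs])
  refine h.congr_deriv ?_
  simp only [Pi.mul_apply, Pi.div_apply, id]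
  field_simp
  ring

theorem hasDerivAt_inv_sub_sin_div_cos_sub_cos_div_sin {x : ℝ} (hx : x ≠ 0) (hc : cos x ≠ 0)
    (hs : sin x ≠ 0) :
    HasDerivAt (fun y => y⁻¹ - sin y / cos y - cos y / sin y)
      (1 / sin x ^ 2 - 1 / cos x ^ 2 - 1 / x ^ 2) x := by
  have h := ((hasDerivAt_inv hx).sub ((hasDerivAt_sin x).div (hasDerivAt_cos x) hc)).sub
    ((hasDerivAt_cos x).div (hasDerivAt_sin x) hs)
  refine h.congr_deriv ?_
  field_simp
  linear_combination (x ^ 2 * (cos x ^ 2 - sin x ^ 2)) * sin_sq_add_cos_sq x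

theorem one_div_sin_sq_sub_one_div_cos_sq_lt {x : ℝ} (hx : 0 < x) (hx' : x < π / 2) :
    1 / sin x ^ 2 - 1 / cos x ^ 2 < 1 / x ^ 2 := by
  have hs : 0 < sin x := sin_pos_of_pos_of_lt_pi hx (by linarith [pi_pos])
  have hc : 0 < cos x := cos_pos_of_mem_Ioo ⟨by linarith, hx'⟩
  have hcot : cos x / sin x < 1 / x := by
    have h := lt_tan hx hx'
    rw [tan_eq_sin_div_cos, lt_div_iff₀ hc] at h
    rw [div_lt_div_iff₀ hs hx]
    linarith
  calc 1 / sin x ^ 2 - 1 / cos x ^ 2 = (cos x / sin x) ^ 2 - (sin x / cos x) ^ 2 := by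
        field_simp
        linear_combination (sin x ^ 2 - cos x ^ 2) * sin_sq_add_cos_sq x
    _ < (cos x / sin x) ^ 2 := sub_lt_self _ (by positivity)
    _ < (1 / x) ^ 2 := by gcongr
    _ = 1 / x ^ 2 := by rw [one_div_pow]

end Real

/-- The function `x ↦ log(x · cot x)` is strictly concave on `(0, π/2)`. -/
theorem log_xcot_strictConcave :
    StrictConcaveOn ℝ (Set.Ioo 0 (π / 2))
      (fun x : ℝ => Real.log (x * Real.cos x / Real.sin x)) := by
  have hne : ∀ x ∈ Ioo 0 (π / 2), x ≠ 0 ∧ cos x ≠ 0 ∧ sin x ≠ 0 := fun x hx =>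
    ⟨hx.1.ne', (cos_pos_of_mem_Ioo ⟨by linarith [hx.1, pi_pos], hx.2⟩).ne',
      (sin_pos_of_pos_of_lt_pi hx.1 (by linarith [hx.2, pi_pos])).ne'⟩
  exact strictConcaveOn_of_hasDerivAt2_neg (convex_Ioo _ _) isOpen_Ioo
    (fun x hx => hasDerivAt_log_mul_cos_div_sin (hne x hx).1 (hne x hx).2.1 (hne x hx).2.2)
    (fun x hx => hasDerivAt_inv_sub_sin_div_cos_sub_cos_div_sin (hne x hx).1 (hne x hx).2.1
      (hne x hx).2.2)
    fun x hx => sub_neg.mpr (one_div_sin_sq_sub_one_div_cos_sq_lt hx.1 hx.2)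
end

section
/- For every real t with 0 < t < π, one has cos t < (sin t / t)². -/
/-!
With `x = t / 2` and `c = cos x`, the identities `cos t = 2c² - 1` and `sin t / t = (sin x / x) c`
reduce the claim to `2c² - 1 < ((sin x / x) c)²`. Since `x < tan x` on `(0, π/2)` we have
`c < sin x / x`, hence `((sin x / x) c)² > c⁴ ≥ 2c² - 1`, the last step being `(c² - 1)² ≥ 0`.
-/

open Real

namespace Real

theorem cos_lt_sin_div {x : ℝ} (hx0 : 0 < x) (hx : x < π / 2) : cos x < sin x / x := by
  have hcos : 0 < cos x := cos_pos_of_mem_Ioo ⟨by linarith, hx⟩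
  have htan : x < sin x / cos x := tan_eq_sin_div_cos x ▸ lt_tan hx0 hx
  rw [lt_div_iff₀ hcos] at htan
  rwa [lt_div_iff₀ hx0, mul_comm]

theorem sin_div_eq_sin_half_div_mul_cos_half (t : ℝ) :
    sin t / t = sin (t / 2) / (t / 2) * cos (t / 2) := by
  conv_lhs => rw [← mul_div_cancel₀ t (two_ne_zero' ℝ), sin_two_mul]
  ring

end Real

/-- For `0 < t < π`, one has `cos t < (sin t / t)²`. -/
theorem cos_lt_sq_sin_div (t : ℝ) (ht0 : 0 < t) (htπ : t < π) :
    Real.cos t < (Real.sin t / t) ^ 2 := by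
  set x := t / 2 with hx
  set c := cos x
  have hx0 : 0 < x := by positivity
  have hxπ : x < π / 2 := by linarith
  have hc : 0 < c := cos_pos_of_mem_Ioo ⟨by linarith, hxπ⟩
  have hlt : c < sin x / x := cos_lt_sin_div hx0 hxπ
  calc cos t = 2 * c ^ 2 - 1 := by rw [cos_sq x, show 2 * x = t by ring]; ring
    _ ≤ (c * c) ^ 2 := by nlinarith [sq_nonneg (c ^ 2 - 1)]
    _ < (sin x / x * c) ^ 2 := by gcongr
    _ = (sin t / t) ^ 2 := by rw [sin_div_eq_sin_half_div_mul_cos_half t]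
end
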